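/- The Eyal–Sirer relative revenue R(α, γ) is monotonically nondecreasing in γ ∈ [0,1] for every fixed α ∈ (0, 1/2), and the profitability threshold α*(γ) defined by R(α*, γ) = α* is given by α*(γ) = (1 − γ)/(3 − 2γ). In particular α*(0) = 1/3, α*(1/2) = 1/4, α*(1) = 0. -/
import Mathlib


/-- The Eyal–Sirer selfish mining relative revenue. -/
noncomputable def R (α γ : ℝ) : ℝ :=
  (α * (1 - α) ^ 2 * (4 * α + γ * (1 - 2 * α)) - α ^ 3) / (1 - α * (1 + (2 - α) * α))

theorem stmt_13 :
    (∀ α : ℝ, 0 < α → α < 1 / 2 → ∀ γ1 γ2 : ℝ, 0 ≤ γ1 → γ2 ≤ 1 → γ1 ≤ γ2 →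
      R α γ1 ≤ R α γ2) ∧
    (∀ α γ : ℝ, 0 < α → α < 1 / 2 → 0 ≤ γ → γ ≤ 1 →
      (R α γ > α ↔ α > (1 - γ) / (3 - 2 * γ))) ∧
    (1 - (0 : ℝ)) / (3 - 2 * 0) = 1 / 3 ∧
    (1 - (1 : ℝ) / 2) / (3 - 2 * (1 / 2)) = 1 / 4 ∧
    (1 - (1 : ℝ)) / (3 - 2 * 1) = 0 := by
  refine ⟨?_, ?_, by norm_num, by norm_num, by norm_num⟩
  · intro α hα hα2 γ1 γ2 h1 h2 h12
    have hD : (0:ℝ) < 1 - α * (1 + (2 - α) * α) := by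
      nlinarith [mul_pos hα (show (0:ℝ) < 1/2 - α by linarith), pow_pos hα 3]
    unfold R
    apply div_le_div_of_nonneg_right ?_ hD.le
    nlinarith [mul_nonneg (mul_nonneg (sub_nonneg.2 h12) hα.le)
      (mul_nonneg (sq_nonneg (1 - α)) (show (0:ℝ) ≤ 1 - 2 * α by linarith))]
  · intro α γ hα hα2 hγ hγ1
    have hD : (0:ℝ) < 1 - α * (1 + (2 - α) * α) := by
      nlinarith [mul_pos hα (show (0:ℝ) < 1/2 - α by linarith), pow_pos hα 3]
    have h3 : (0:ℝ) < 3 - 2 * γ := by linarith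
    have hP : (0:ℝ) < α * (1 - α) ^ 2 := mul_pos hα (pow_pos (by linarith) 2)
    have key : (α * (1 - α) ^ 2 * (4 * α + γ * (1 - 2 * α)) - α ^ 3)
        - α * (1 - α * (1 + (2 - α) * α))
        = (α * (1 - α) ^ 2) * (α * (3 - 2 * γ) - (1 - γ)) := by ring
    unfold R
    rw [gt_iff_lt, lt_div_iff₀ hD, gt_iff_lt, div_lt_iff₀ h3]
    constructor
    · intro h
      by_contra hc
      push_neg at hc
      nlinarith [mul_nonneg hP.le (show (0:ℝ) ≤ (1 - γ) - α * (3 - 2 * γ) by linarith)]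
    · intro h
      nlinarith [mul_pos hP (show (0:ℝ) < α * (3 - 2 * γ) - (1 - γ) by linarith)]
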